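/- A permutation σ ∈ Perm(α) belongs to the normalizer of the Young-type subgroup P in Perm(α) if and only if σ preserves the fibre partition of f, i.e., for all a, b ∈ α one has f(a) = f(b) if and only if f(σ(a)) = f(σ(b)). -/

import Mathlib

/-- The Young-type subgroup of `Equiv.Perm α` associated to `f : α → ι`: the permutations
preserving every fibre of `f` (the pointwise stabilizer of the fibre partition of `f`). -/
def youngSubgroup {α ι : Type*} (f : α → ι) : Subgroup (Equiv.Perm α) where
  carrier := {σ | ∀ a : α, f (σ a) = f a}
  one_mem' := fun _ => rfl
  mul_mem' := fun {σ τ} hσ hτ a => (hσ (τ a)).trans (hτ a)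
  inv_mem' := fun {σ} hσ a => by
    have h := hσ (σ⁻¹ a)
    rw [← Equiv.Perm.mul_apply, mul_inv_cancel, Equiv.Perm.one_apply] at h
    exact h.symm

/-!
Conjugating by `σ` turns the Young subgroup of `f` into that of `f ∘ σ`, so `σ` normalizes it
iff `f` and `f ∘ σ` have the same Young subgroup. A Young subgroup determines its fibre
partition, since `f a = f b` exactly when the transposition `(a b)` lies in it.
-/

namespace youngSubgroup

variable {α ι κ : Type*}

theorem mem_iff {f : α → ι} {τ : Equiv.Perm α} :
    τ ∈ youngSubgroup f ↔ ∀ a, f (τ a) = f a :=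
  Iff.rfl

theorem swap_mem_iff [DecidableEq α] {f : α → ι} {a b : α} :
    Equiv.swap a b ∈ youngSubgroup f ↔ f a = f b := by
  refine ⟨fun h => by simpa using (h a).symm, fun hab x => ?_⟩
  rcases eq_or_ne x a with rfl | hxa
  · simpa using hab.symm
  rcases eq_or_ne x b with rfl | hxb
  · simpa using hab
  · rw [Equiv.swap_apply_of_ne_of_ne hxa hxb]

theorem conj_mem_iff {f : α → ι} {σ τ : Equiv.Perm α} :
    σ * τ * σ⁻¹ ∈ youngSubgroup f ↔ τ ∈ youngSubgroup (f ∘ σ) := by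
  simp only [mem_iff, Equiv.Perm.mul_apply, Function.comp_apply]
  refine ⟨fun h a => by simpa using h (σ a), fun h a => by simpa using h (σ⁻¹ a)⟩

theorem eq_iff {f : α → ι} {g : α → κ} :
    youngSubgroup f = youngSubgroup g ↔ ∀ a b, f a = f b ↔ g a = g b := by
  classical
  constructor
  · intro h a b
    rw [← swap_mem_iff, ← swap_mem_iff, h]
  · intro h
    ext τ
    exact forall_congr' fun a => h (τ a) a

end youngSubgroup

theorem mem_normalizer_young_iff_general {α ι : Type*}
    (f : α → ι) (σ : Equiv.Perm α) :
    σ ∈ Subgroup.normalizer (youngSubgroup f : Set (Equiv.Perm α)) ↔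
      ∀ a b : α, (f a = f b ↔ f (σ a) = f (σ b)) := by
  rw [Subgroup.mem_normalizer_iff]
  simp only [youngSubgroup.conj_mem_iff]
  rw [← SetLike.ext_iff, youngSubgroup.eq_iff]
  rfl

/-- A permutation normalizes the Young subgroup of `f` iff it preserves the fibre
partition of `f`. -/
theorem mem_normalizer_young_iff {α ι : Type*} [DecidableEq α] [DecidableEq ι] [Fintype α]
    (f : α → ι) (σ : Equiv.Perm α) :
    σ ∈ Subgroup.normalizer (youngSubgroup f : Set (Equiv.Perm α)) ↔
      ∀ a b : α, (f a = f b ↔ f (σ a) = f (σ b)) :=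
  mem_normalizer_young_iff_general f σ
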